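/- Let R be a commutative ring, K a natural number, c : Fin K → R a family of constants, and P : Fin K → MvPolynomial (Fin K) R a family of polynomials such that for every i, every monomial in the support of P i involves only variables x_j with j < i. Fix an exponent vector α : Fin K → ℕ and let Q = ∏_{i} (c_i · x_i + P_i)^{α_i}. Then every exponent vector β in the support of Q is either equal to α or strictly smaller than α in the lexicographic order on exponent vectors in which the variable with the highest index is the most significant (i.e., at the largest index where β and α differ, β is smaller). -/

import Mathlib

/-!
Order monomials colexicographically (the highest-index variable is most significant); this is a
monomial order. Since every monomial of `P i` only involves variables below `i`, the leading
monomial of `c i • X i + P i` is at most `X i`, and degrees are subadditive under products and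
powers, so every monomial of the product is at most `∏ i, X i ^ α i`.
-/

open MvPolynomial

namespace MonomialOrder

variable {σ : Type*} [LinearOrder σ] [WellFoundedLT σ]

noncomputable def colex : MonomialOrder σ where
  syn := Colex (σ →₀ ℕ)
  toSyn := { toEquiv := toColex, map_add' := fun _ _ => rfl }
  toSyn_monotone := Finsupp.toColex_monotone

theorem colex_lt_iff {c d : σ →₀ ℕ} :
    c ≺[colex] d ↔ ∃ i, (∀ j, i < j → c j = d j) ∧ c i < d i :=
  Finsupp.Colex.lt_iff

theorem colex_le_iff {c d : σ →₀ ℕ} :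
    c ≼[colex] d ↔ c = d ∨ ∃ i, c i < d i ∧ ∀ j, i < j → c j = d j := by
  rw [le_iff_eq_or_lt, colex_lt_iff, EmbeddingLike.apply_eq_iff_eq]
  simp only [and_comm]

theorem colex_lt_single_of_vars_lt {c : σ →₀ ℕ} {i : σ} (hc : ∀ j, c j ≠ 0 → j < i) :
    c ≺[colex] Finsupp.single i 1 := by
  refine colex_lt_iff.mpr ⟨i, fun j hij => ?_, ?_⟩
  · rw [Finsupp.single_eq_of_ne hij.ne', ← not_ne_iff]
    exact fun h => (hc j h).not_gt hij
  · rw [Finsupp.single_eq_same, Nat.lt_one_iff, ← not_ne_iff]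
    exact fun h => (hc i h).false

variable {R : Type*} [CommSemiring R]

theorem colex_degree_C_mul_X_add_le {c : R} {i : σ} {p : MvPolynomial σ R}
    (hp : ∀ m ∈ p.support, ∀ j, m j ≠ 0 → j < i) :
    colex.degree (C c * X i + p) ≼[colex] Finsupp.single i 1 := by
  refine colex.degree_add_le.trans (sup_le ?_ ?_)
  · rw [C_mul_X_eq_monomial]
    exact colex.degree_monomial_le c
  · exact colex.degree_le_iff.mpr fun m hm => (colex_lt_single_of_vars_lt (hp m hm)).le

theorem colex_degree_prod_C_mul_X_add_pow_le {s : Finset σ} {c : σ → R}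
    {P : σ → MvPolynomial σ R} (hP : ∀ i ∈ s, ∀ m ∈ (P i).support, ∀ j, m j ≠ 0 → j < i)
    (α : σ → ℕ) :
    colex.degree (∏ i ∈ s, (C (c i) * X i + P i) ^ α i)
      ≼[colex] ∑ i ∈ s, Finsupp.single i (α i) := by
  refine colex.degree_prod_le.trans ?_
  rw [map_sum, map_sum]
  refine Finset.sum_le_sum fun i hi => (colex.degree_pow_le _).trans ?_
  rw [map_nsmul, ← Finsupp.smul_single_one, map_nsmul]
  exact nsmul_le_nsmul_right (colex_degree_C_mul_X_add_le (hP i hi)) _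

end MonomialOrder

/-- Lemma (reduction): every exponent vector in the support of the triangular
product `∏ i, (c i • X i + P i) ^ (α i)` is either `α` itself or strictly smaller
than `α` in the lexicographic order where the highest-index variable is most
significant. -/
theorem stmt_0 (R : Type*) [CommRing R] (K : ℕ)
    (c : Fin K → R) (P : Fin K → MvPolynomial (Fin K) R)
    (hP : ∀ i : Fin K, ∀ m ∈ (P i).support, ∀ j : Fin K, m j ≠ 0 → j < i)
    (α : Fin K → ℕ) :
    ∀ β ∈ (∏ i : Fin K,
        (MvPolynomial.C (c i) * MvPolynomial.X i + P i) ^ (α i)).support,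
      ((β : (Fin K →₀ ℕ)) = Finsupp.equivFunOnFinite.symm α) ∨ ∃ i : Fin K, β i < α i ∧ ∀ j : Fin K, i < j → β j = α j := by
  intro β hβ
  have hle := (MonomialOrder.colex.le_degree hβ).trans
    (MonomialOrder.colex_degree_prod_C_mul_X_add_pow_le (fun i _ => hP i) α)
  rw [← Finsupp.equivFunOnFinite_symm_eq_sum, MonomialOrder.colex_le_iff] at hle
  simpa only [Finsupp.coe_equivFunOnFinite_symm] using hle
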